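/- arXiv:2005.05595 — 6 statements merged into one kernel-verified Lean document; each statement's English description precedes it below -/
import Mathlib

section
/- If N_F > 1 and N_M > 1, then the pair (M*, F*) with M* = (N_M/(N_F+N_M))·(1/β)·ln N_F and F* = (N_F/(N_F+N_M))·(1/β)·ln N_F is the unique positive solution of the equilibrium equations r·ρ·F·e^{-β(M+F)} = μ_M·M and (1-r)·ρ·e^{-β(M+F)} = μ_F, where N_F = (1-r)ρ/μ_F and N_M = rρ/μ_M. -/
/-! Writing `rρ = N_M μ_M` and `(1-r)ρ = N_F μ_F`, the second equation says exactly
`e^{-β(M+F)} = 1/N_F`, i.e. `M + F = (ln N_F)/β`; given that, the first becomes `N_F M = N_M F`.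
A prescribed total `M + F` split in the ratio `M : F = N_M : N_F` has exactly one solution. -/

open Real

lemma exp_neg_mul_eq_inv_iff {β N s : ℝ} (hβ : β ≠ 0) (hN : 0 < N) :
    exp (-β * s) = N⁻¹ ↔ s = 1 / β * log N := by
  rw [← exp_log (inv_pos.2 hN), exp_eq_exp, log_inv, neg_mul, neg_inj, one_div,
    eq_inv_mul_iff_mul_eq₀ hβ]

lemma add_eq_and_mul_eq_mul_iff {a b s M F : ℝ} (hab : a + b ≠ 0) :
    (M + F = s ∧ M * a = b * F) ↔ (M = b / (a + b) * s ∧ F = a / (a + b) * s) := by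
  constructor
  · rintro ⟨rfl, h⟩
    constructor
    · field_simp
      linear_combination h
    · field_simp
      linear_combination -h
  · rintro ⟨rfl, rfl⟩
    exact ⟨by field_simp; ring, by field_simp⟩

lemma equilibrium_equations_iff {μM μF NM NF M F e : ℝ} (hμM : μM ≠ 0) (hμF : μF ≠ 0)
    (hNF : NF ≠ 0) :
    (NM * μM * F * e = μM * M ∧ NF * μF * e = μF) ↔ (e = NF⁻¹ ∧ M * NF = NM * F) := by
  have hsecond : NF * μF * e = μF ↔ e = NF⁻¹ := by
    rw [← mul_eq_one_iff_eq_inv₀ hNF]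
    constructor <;> intro h
    · apply mul_left_cancel₀ hμF
      linear_combination h
    · linear_combination μF * h
  rw [hsecond, and_comm]
  refine and_congr_right ?_
  rintro rfl
  constructor <;> intro h
  · field_simp at h
    linear_combination -h
  · field_simp
    linear_combination -h

theorem unique_positive_equilibrium_general
    (r ρ β μM μF : ℝ) (hβ : 0 < β)
    (hμM : 0 < μM) (hμF : 0 < μF)
    (NF NM : ℝ) (hNF : NF = (1 - r) * ρ / μF) (hNM : NM = r * ρ / μM)
    (hNF1 : 1 < NF) (hNM1 : 1 < NM) :
    ∀ M F : ℝ, 0 < M → 0 < F →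
      ((r * ρ * F * Real.exp (-β * (M + F)) = μM * M ∧
        (1 - r) * ρ * Real.exp (-β * (M + F)) = μF) ↔
       (M = NM / (NF + NM) * (1 / β) * Real.log NF ∧
        F = NF / (NF + NM) * (1 / β) * Real.log NF)) := by
  intro M F _ _
  have hNF0 : 0 < NF := zero_lt_one.trans hNF1
  have hrρ : r * ρ = NM * μM := by rw [hNM, div_mul_cancel₀ _ hμM.ne']
  have hrρ' : (1 - r) * ρ = NF * μF := by rw [hNF, div_mul_cancel₀ _ hμF.ne']
  rw [hrρ, hrρ', equilibrium_equations_iff hμM.ne' hμF.ne' hNF0.ne',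
    exp_neg_mul_eq_inv_iff hβ.ne' hNF0, mul_assoc (NM / _), mul_assoc (NF / _)]
  exact add_eq_and_mul_eq_mul_iff (by linarith)

theorem unique_positive_equilibrium
    (r ρ β μM μF : ℝ) (hr : r ∈ Set.Ioo (0:ℝ) 1) (hρ : 0 < ρ) (hβ : 0 < β)
    (hμM : 0 < μM) (hμF : 0 < μF)
    (NF NM : ℝ) (hNF : NF = (1 - r) * ρ / μF) (hNM : NM = r * ρ / μM)
    (hNF1 : 1 < NF) (hNM1 : 1 < NM) :
    ∀ M F : ℝ, 0 < M → 0 < F →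
      ((r * ρ * F * Real.exp (-β * (M + F)) = μM * M ∧
        (1 - r) * ρ * Real.exp (-β * (M + F)) = μF) ↔
       (M = NM / (NF + NM) * (1 / β) * Real.log NF ∧
        F = NF / (NF + NM) * (1 / β) * Real.log NF)) :=
  unique_positive_equilibrium_general r ρ β μM μF hβ hμM hμF NF NM hNF hNM hNF1 hNM1
end

section
/- Let f(x) = 1 + (1-ε)·a/(x+εa) - N_F·e^{-cx} with a, c > 0, N_F > 1 and 1/N_F < ε < 1. Then every root x* > 0 of f satisfies x* ≥ ln(εN_F)/c. -/
/-!
At a positive root, `ε N_F e^{-cx} = ε (1 + (1-ε)a/(x+εa)) = 1 - (1-ε)x/(x+εa) ≤ 1`; taking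
logarithms gives `ln(ε N_F) ≤ c x`.
-/

open Real

theorem mul_one_add_div_le_one {ε a x : ℝ} (hε : ε ≤ 1) (ha : 0 ≤ a) (hx : 0 < x)
    (hε0 : 0 < ε) : ε * (1 + (1 - ε) * a / (x + ε * a)) ≤ 1 := by
  have hden : 0 < x + ε * a := by positivity
  have key : ε * (1 + (1 - ε) * a / (x + ε * a)) = 1 - (1 - ε) * x / (x + ε * a) := by
    field_simp
    ring
  rw [key]
  have : 0 ≤ (1 - ε) * x / (x + ε * a) := div_nonneg (mul_nonneg (by linarith) hx.le) hden.le
  linarith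

theorem log_div_le_of_mul_exp_neg_le_one {K c x : ℝ} (hK : 0 < K) (hc : 0 < c)
    (h : K * exp (-c * x) ≤ 1) : log K / c ≤ x := by
  have hK_le : K ≤ exp (c * x) := by
    rwa [neg_mul, exp_neg, ← div_eq_mul_inv, div_le_one (exp_pos _)] at h
  rw [div_le_iff₀ hc, mul_comm x c]
  exact (log_le_iff_le_exp hK).2 hK_le

theorem root_lower_bound
    (a c NF ε : ℝ) (ha : 0 < a) (hc : 0 < c) (hNF : 1 < NF)
    (hε1 : 1 / NF < ε) (hε2 : ε < 1)
    (f : ℝ → ℝ)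
    (hf : ∀ x, f x = 1 + (1 - ε) * a / (x + ε * a) - NF * Real.exp (-c * x))
    (x : ℝ) (hx : 0 < x) (hroot : f x = 0) :
    Real.log (ε * NF) / c ≤ x := by
  have hNF0 : 0 < NF := one_pos.trans hNF
  have hε0 : 0 < ε := (one_div_pos.2 hNF0).trans hε1
  have hroot' : NF * exp (-c * x) = 1 + (1 - ε) * a / (x + ε * a) := by
    rw [hf] at hroot
    linarith
  apply log_div_le_of_mul_exp_neg_le_one (mul_pos hε0 hNF0) hc
  rw [mul_assoc, hroot']
  exact mul_one_add_div_le_one hε2.le ha.le hx hε0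
end

section
/- Let f(x) = 1 + (1-ε)·a/(x+εa) - N_F·e^{-cx} with a, c > 0, N_F > 1 and 0 ≤ ε < 1/N_F. If x_c > 0 satisfies f(x_c) = 0 and f'(x_c) = 0, then x_c = 2/(c(1 + √(1 + 4/(ac(1-ε))))) - εa. -/
/-!
With `y = x_c + εa` and `A = (1 - ε)a`, eliminating `N_F e^{-c x_c}` between `f(x_c) = 0` and
`f'(x_c) = 0` leaves the quadratic `c y² + c A y = A`. Since `(y + A)(1 - c y) = y` and
`y + A = x_c + a > 0`, we get `c y < 1` and hence `A > 0`. Then `1 + 4/(A c) = ((2 - c y)/(c y))²`,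
and solving for `y` gives the formula.
-/

open Real

theorem hasDerivAt_one_add_div_sub_mul_exp {A b N c x : ℝ} (hx : x + b ≠ 0) :
    HasDerivAt (fun x => 1 + A / (x + b) - N * exp (-c * x))
      (-A / (x + b) ^ 2 + c * N * exp (-c * x)) x := by
  have hrat : HasDerivAt (fun x => A / (x + b)) (-A / (x + b) ^ 2) x := by
    simpa using (hasDerivAt_const x A).fun_div ((hasDerivAt_id x).add_const b) hx
  have hexp : HasDerivAt (fun x => N * exp (-c * x)) (N * (exp (-c * x) * -c)) x :=
    (((hasDerivAt_id x).const_mul (-c)).exp.congr_deriv (by simp)).const_mul N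
  exact (((hasDerivAt_const x 1).fun_add hrat).fun_sub hexp).congr_deriv (by ring)

theorem quadratic_of_root_of_deriv_eq_zero {A c NE y : ℝ} (hy : y ≠ 0)
    (hroot : 1 + A / y - NE = 0) (hderiv : -A / y ^ 2 + c * NE = 0) :
    c * y ^ 2 + c * A * y = A := by
  field_simp at hroot hderiv
  linear_combination c * y * hroot + hderiv

theorem pos_of_quadratic_of_add_pos {A c y : ℝ} (hc : 0 < c) (hy : 0 < y) (hyA : 0 < y + A)
    (h : c * y ^ 2 + c * A * y = A) : 0 < A := by
  have hfactor : (y + A) * (1 - c * y) = y := by linear_combination -h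
  have hcy : 0 < 1 - c * y := pos_of_mul_pos_right (hfactor.symm ▸ hy) hyA.le
  have hA : A * (1 - c * y) = c * y ^ 2 := by linear_combination -h
  exact pos_of_mul_pos_left (hA ▸ by positivity) hcy.le

theorem eq_two_div_of_quadratic {A c y : ℝ} (hA : 0 < A) (hc : 0 < c) (hy : 0 < y)
    (h : c * y ^ 2 + c * A * y = A) :
    y = 2 / (c * (1 + √(1 + 4 / (A * c)))) := by
  have hcy : 0 < c * y := mul_pos hc hy
  have hcy1 : c * y < 1 := by nlinarith [mul_pos hc (mul_pos hy hy)]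
  have hdisc : 1 + 4 / (A * c) = ((2 - c * y) / (c * y)) ^ 2 := by
    field_simp
    linear_combination 4 * h
  rw [hdisc, sqrt_sq (div_nonneg (by linarith) hcy.le)]
  field_simp
  ring

theorem double_root_formula_general
    (a c NF ε : ℝ) (ha : 0 < a) (hc : 0 < c)
    (hε0 : 0 ≤ ε)
    (f : ℝ → ℝ)
    (hf : ∀ x, f x = 1 + (1 - ε) * a / (x + ε * a) - NF * Real.exp (-c * x))
    (xc : ℝ) (hxc : 0 < xc) (hroot : f xc = 0) (hderiv : deriv f xc = 0) :
    xc = 2 / (c * (1 + Real.sqrt (1 + 4 / (a * c * (1 - ε))))) - ε * a := by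
  set y := xc + ε * a
  have hy : 0 < y := by positivity
  have hf' : HasDerivAt f (-((1 - ε) * a) / y ^ 2 + c * (NF * exp (-c * xc))) xc := by
    rw [funext hf, ← mul_assoc]
    exact hasDerivAt_one_add_div_sub_mul_exp hy.ne'
  have hquad : c * y ^ 2 + c * ((1 - ε) * a) * y = (1 - ε) * a :=
    quadratic_of_root_of_deriv_eq_zero hy.ne' (hf xc ▸ hroot) (hf'.deriv ▸ hderiv)
  have hA : 0 < (1 - ε) * a := pos_of_quadratic_of_add_pos hc hy (by linarith) hquad
  rw [show a * c * (1 - ε) = (1 - ε) * a * c by ring, ← eq_two_div_of_quadratic hA hc hy hquad]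
  ring

theorem double_root_formula
    (a c NF ε : ℝ) (ha : 0 < a) (hc : 0 < c) (hNF : 1 < NF)
    (hε0 : 0 ≤ ε) (hε : ε < 1 / NF)
    (f : ℝ → ℝ)
    (hf : ∀ x, f x = 1 + (1 - ε) * a / (x + ε * a) - NF * Real.exp (-c * x))
    (xc : ℝ) (hxc : 0 < xc) (hroot : f xc = 0) (hderiv : deriv f xc = 0) :
    xc = 2 / (c * (1 + Real.sqrt (1 + 4 / (a * c * (1 - ε))))) - ε * a :=
  double_root_formula_general a c NF ε ha hc hε0 f hf xc hxc hroot hderiv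
end

section
/- With the Dulac function ψ(M,F) = (M+γM_S*)/(F(M+εγM_S*)), the divergence of ψ times the vector field of the SIT system with constant sterile population is strictly negative on the open positive quadrant; concretely, ∂/∂M [rρ e^{-β(M+F)} - μ_M M (M+γM_S*)/(F(M+εγM_S*))] + ∂/∂F [(1-r)ρ e^{-β(M+F)} - μ_F (M+γM_S*)/(M+εγM_S*)] = -rρβ e^{-β(M+F)} - (μ_M/F)·(εγM_S*(2M+γM_S*)+M²)/(M+εγM_S*)² - (1-r)βρ e^{-β(M+F)} < 0 for all M > 0, F > 0. -/
open Real

/-! The two exponential terms differentiate to `-ρ β exp (-β (M + F))` in total, the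
`F`-component has no other `F`-dependence, and for `0 ≤ b` the rational factor
`M (M + a) / (M + b)` is increasing: its derivative is `(M² + 2bM + ab) / (M + b)² > 0`. -/

theorem hasDerivAt_const_mul_exp_neg_mul {u : ℝ → ℝ} {x : ℝ} (c β : ℝ)
    (hu : HasDerivAt u 1 x) :
    HasDerivAt (fun y => c * exp (-β * u y)) (-(c * β) * exp (-β * u x)) x :=
  ((hu.const_mul (-β)).exp.const_mul c).congr_deriv (by ring)

theorem hasDerivAt_mul_mul_add_div_mul_add (k c a b : ℝ) {x : ℝ} (hc : c ≠ 0)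
    (hx : x + b ≠ 0) :
    HasDerivAt (fun y => k * y * (y + a) / (c * (y + b)))
      (k / c * ((b * (2 * x + a) + x ^ 2) / (x + b) ^ 2)) x := by
  have hnum : HasDerivAt (fun y => k * y * (y + a)) (k * (2 * x + a)) x :=
    (((hasDerivAt_id' x).const_mul k).mul ((hasDerivAt_id' x).add_const a)).congr_deriv
      (by ring)
  have hden : HasDerivAt (fun y => c * (y + b)) c x := by
    simpa using ((hasDerivAt_id x).add_const b).const_mul c
  refine (hnum.div hden (mul_ne_zero hc hx)).congr_deriv ?_
  field_simp
  ring

theorem dulac_divergence_negative_general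
    (r ρ β μM μF γ ε MS : ℝ) (hρ : 0 < ρ) (hβ : 0 < β)
    (hμM : 0 < μM) (hγ : γ ∈ Set.Ioc (0:ℝ) 1) (hε : ε ∈ Set.Ico (0:ℝ) 1)
    (hMS : 0 < MS) :
    ∀ M F : ℝ, 0 < M → 0 < F →
      deriv (fun M' : ℝ =>
          r * ρ * Real.exp (-β * (M' + F))
            - μM * M' * (M' + γ * MS) / (F * (M' + ε * γ * MS))) M
      + deriv (fun F' : ℝ =>
          (1 - r) * ρ * Real.exp (-β * (M + F'))
            - μF * (M + γ * MS) / (M + ε * γ * MS)) F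
      = - r * ρ * β * Real.exp (-β * (M + F))
          - (μM / F) * ((ε * γ * MS * (2 * M + γ * MS) + M ^ 2) / (M + ε * γ * MS) ^ 2)
          - (1 - r) * β * ρ * Real.exp (-β * (M + F)) ∧
      deriv (fun M' : ℝ =>
          r * ρ * Real.exp (-β * (M' + F))
            - μM * M' * (M' + γ * MS) / (F * (M' + ε * γ * MS))) M
      + deriv (fun F' : ℝ =>
          (1 - r) * ρ * Real.exp (-β * (M + F'))
            - μF * (M + γ * MS) / (M + ε * γ * MS)) F < 0 := by
  intro M F hM hF
  have hγ0 := hγ.1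
  have hε0 := hε.1
  have hMb : 0 < M + ε * γ * MS := by positivity
  rw [((hasDerivAt_const_mul_exp_neg_mul (r * ρ) β ((hasDerivAt_id' M).add_const F)).fun_sub
      (hasDerivAt_mul_mul_add_div_mul_add μM F (γ * MS) (ε * γ * MS) hF.ne' hMb.ne')).deriv,
    ((hasDerivAt_const_mul_exp_neg_mul ((1 - r) * ρ) β ((hasDerivAt_id' F).const_add M)).sub_const
      (μF * (M + γ * MS) / (M + ε * γ * MS))).deriv]
  refine ⟨by ring, ?_⟩
  have hexp : 0 < ρ * β * exp (-β * (M + F)) := by positivity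
  have hrational :
      0 < μM / F * ((ε * γ * MS * (2 * M + γ * MS) + M ^ 2) / (M + ε * γ * MS) ^ 2) := by
    positivity
  linear_combination hexp + hrational

theorem dulac_divergence_negative
    (r ρ β μM μF γ ε MS : ℝ) (hr : r ∈ Set.Ioo (0:ℝ) 1) (hρ : 0 < ρ) (hβ : 0 < β)
    (hμM : 0 < μM) (hμF : 0 < μF) (hγ : γ ∈ Set.Ioc (0:ℝ) 1) (hε : ε ∈ Set.Ico (0:ℝ) 1)
    (hMS : 0 < MS) :
    ∀ M F : ℝ, 0 < M → 0 < F →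
      deriv (fun M' : ℝ =>
          r * ρ * Real.exp (-β * (M' + F))
            - μM * M' * (M' + γ * MS) / (F * (M' + ε * γ * MS))) M
      + deriv (fun F' : ℝ =>
          (1 - r) * ρ * Real.exp (-β * (M + F'))
            - μF * (M + γ * MS) / (M + ε * γ * MS)) F
      = - r * ρ * β * Real.exp (-β * (M + F))
          - (μM / F) * ((ε * γ * MS * (2 * M + γ * MS) + M ^ 2) / (M + ε * γ * MS) ^ 2)
          - (1 - r) * β * ρ * Real.exp (-β * (M + F)) ∧
      deriv (fun M' : ℝ =>
          r * ρ * Real.exp (-β * (M' + F))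
            - μM * M' * (M' + γ * MS) / (F * (M' + ε * γ * MS))) M
      + deriv (fun F' : ℝ =>
          (1 - r) * ρ * Real.exp (-β * (M + F'))
            - μF * (M + γ * MS) / (M + ε * γ * MS)) F < 0 :=
  dulac_divergence_negative_general r ρ β μM μF γ ε MS hρ hβ hμM hγ hε hMS
end

section
/- For all M ≥ 0, F ≥ 0 and M_s > 0: (M+εγM_s)/(M+γM_s) · e^{-β(M+F)} ≤ (1-ε)·α/(γM_s) + ε, where α = 1/(eβ). -/
open Real

theorem fertility_factor_bound
    (β γ ε Ms : ℝ) (hβ : 0 < β) (hγ : γ ∈ Set.Ioc (0:ℝ) 1) (hε : ε ∈ Set.Ico (0:ℝ) 1)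
    (hMs : 0 < Ms) (α : ℝ) (hα : α = 1 / (Real.exp 1 * β)) :
    ∀ M F : ℝ, 0 ≤ M → 0 ≤ F →
      (M + ε * γ * Ms) / (M + γ * Ms) * Real.exp (-β * (M + F))
        ≤ (1 - ε) * α / (γ * Ms) + ε := by
  intro M F hM hF
  obtain ⟨hγ0, hγ1⟩ := hγ
  obtain ⟨hε0, hε1⟩ := hε
  have hγMs : 0 < γ * Ms := mul_pos hγ0 hMs
  have hden : 0 < M + γ * Ms := by linarith
  have hexp : 0 < Real.exp (-β * (M + F)) := Real.exp_pos _
  -- decomposition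
  have hdecomp : (M + ε * γ * Ms) / (M + γ * Ms)
      = (1 - ε) * (M / (M + γ * Ms)) + ε := by
    field_simp
    ring
  -- key: M * exp(-β*(M+F)) ≤ 1/(e*β)
  have hkey : M * Real.exp (-β * (M + F)) ≤ 1 / (Real.exp 1 * β) := by
    have h1 : M * Real.exp (-β * (M + F)) ≤ M * Real.exp (-(β * M)) := by
      apply mul_le_mul_of_nonneg_left _ hM
      apply Real.exp_le_exp.2
      nlinarith [mul_nonneg hβ.le hF]
    have h2 : β * M ≤ Real.exp (β * M - 1) := by
      have := Real.add_one_le_exp (β * M - 1)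
      linarith
    have h3 : M * Real.exp (-(β * M)) ≤ 1 / (Real.exp 1 * β) := by
      rw [Real.exp_neg, ← div_eq_mul_inv, div_le_div_iff₀ (Real.exp_pos _) (by positivity)]
      have he : Real.exp (β * M - 1) * Real.exp 1 = Real.exp (β * M) := by
        rw [← Real.exp_add]; ring_nf
      nlinarith [Real.exp_pos (β * M), Real.exp_pos (1:ℝ), Real.exp_pos (β * M - 1)]
    linarith
  rw [hdecomp, hα]
  have hexple : Real.exp (-β * (M + F)) ≤ 1 := by
    apply Real.exp_le_one_iff.2
    nlinarith [mul_nonneg hβ.le (add_nonneg hM hF)]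
  have hfrac : M / (M + γ * Ms) * Real.exp (-β * (M + F)) ≤ (1 / (Real.exp 1 * β)) / (γ * Ms) := by
    have : M / (M + γ * Ms) ≤ M / (γ * Ms) :=
      div_le_div_of_nonneg_left hM hγMs (by linarith) |>.trans_eq rfl
    calc M / (M + γ * Ms) * Real.exp (-β * (M + F))
        ≤ M / (γ * Ms) * Real.exp (-β * (M + F)) := by
          apply mul_le_mul_of_nonneg_right _ hexp.le
          apply div_le_div_of_nonneg_left hM hγMs (by linarith)
      _ = (M * Real.exp (-β * (M + F))) / (γ * Ms) := by ring
      _ ≤ (1 / (Real.exp 1 * β)) / (γ * Ms) := by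
          gcongr
  calc ((1 - ε) * (M / (M + γ * Ms)) + ε) * Real.exp (-β * (M + F))
      = (1 - ε) * (M / (M + γ * Ms) * Real.exp (-β * (M + F))) + ε * Real.exp (-β * (M + F)) := by ring
    _ ≤ (1 - ε) * ((1 / (Real.exp 1 * β)) / (γ * Ms)) + ε * 1 := by
        apply add_le_add
        · exact mul_le_mul_of_nonneg_left hfrac (by linarith)
        · exact mul_le_mul_of_nonneg_left hexple hε0
    _ = (1 - ε) * (1 / (Real.exp 1 * β)) / (γ * Ms) + ε := by ring
end

section
/- Assume ε < 1/N_F and Λ > Λ_crit := [2(cosh(μ_S τ) - 1)/(μ_S τ²)] · [(1-ε)N_F / (γ(1-εN_F)eβ)]. Then (1-r)ρτ·[ ((1-ε)α/γ)·(2(cosh(μ_S τ)-1)/(μ_S τ² Λ)) - (1/N_F - ε) ] < 0, where α = 1/(eβ). Consequently, any sequence (F_n) satisfying F_{n+1} ≤ F_n·exp((1-r)ρτ[((1-ε)α/γ)·(2(cosh(μ_S τ)-1)/(μ_S τ² Λ)) - (1/N_F - ε)]) with F_0 ≥ 0 converges to 0 geometrically. -/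
open Real Filter

theorem periodic_release_extinction
    (r ρ β τ μS γ Λ μF ε NF α : ℝ)
    (hr : r ∈ Set.Ioo (0:ℝ) 1) (hρ : 0 < ρ) (hβ : 0 < β) (hτ : 0 < τ)
    (hμS : 0 < μS) (hγ : 0 < γ) (hΛ : 0 < Λ) (hμF : 0 < μF)
    (hNF : NF = (1 - r) * ρ / μF) (hNF1 : 1 < NF)
    (hα : α = 1 / (Real.exp 1 * β))
    (hε0 : 0 ≤ ε) (hε : ε < 1 / NF)
    (hΛcrit : Λ > (2 * (Real.cosh (μS * τ) - 1) / (μS * τ ^ 2)) *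
        ((1 - ε) * NF / (γ * (1 - ε * NF) * Real.exp 1 * β))) :
    (1 - r) * ρ * τ *
        (((1 - ε) * α / γ) * (2 * (Real.cosh (μS * τ) - 1) / (μS * τ ^ 2 * Λ))
          - (1 / NF - ε)) < 0 ∧
    ∀ F : ℕ → ℝ, 0 ≤ F 0 → (∀ n, 0 ≤ F n) →
      (∀ n, F (n + 1) ≤ F n *
          Real.exp ((1 - r) * ρ * τ *
            (((1 - ε) * α / γ) * (2 * (Real.cosh (μS * τ) - 1) / (μS * τ ^ 2 * Λ))
              - (1 / NF - ε)))) →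
      ((∀ n, F n ≤ F 0 *
          (Real.exp ((1 - r) * ρ * τ *
            (((1 - ε) * α / γ) * (2 * (Real.cosh (μS * τ) - 1) / (μS * τ ^ 2 * Λ))
              - (1 / NF - ε)))) ^ n) ∧
        Tendsto F atTop (nhds 0)) := by
  obtain ⟨hr0, hr1⟩ := hr
  have hNF0 : 0 < NF := lt_trans one_pos hNF1
  have he : (0:ℝ) < Real.exp 1 := Real.exp_pos 1
  have hεNF : ε * NF < 1 := (lt_div_iff₀ hNF0).mp hε
  have hε1 : ε < 1 := lt_of_lt_of_le hε (by
    rw [div_le_one hNF0]; exact hNF1.le)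
  have hcosh : 0 < Real.cosh (μS * τ) - 1 := by
    have : (1:ℝ) < Real.cosh (μS * τ) :=
      Real.one_lt_cosh.mpr (by positivity)
    linarith
  have hE : (1 - r) * ρ * τ *
      (((1 - ε) * α / γ) * (2 * (Real.cosh (μS * τ) - 1) / (μS * τ ^ 2 * Λ))
        - (1 / NF - ε)) < 0 := by
    have hr1' : 0 < 1 - r := by linarith
    have hpos : 0 < (1 - r) * ρ * τ := by positivity
    have hinner : ((1 - ε) * α / γ) * (2 * (Real.cosh (μS * τ) - 1) / (μS * τ ^ 2 * Λ))
        - (1 / NF - ε) < 0 := by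
      rw [hα]
      have hb : 0 < γ * (1 - ε * NF) * Real.exp 1 * β := by
        have : 0 < 1 - ε * NF := by linarith
        positivity
      rw [gt_iff_lt, div_mul_div_comm, div_lt_iff₀ (by positivity)] at hΛcrit
      have goal2 : ((1 - ε) * (1 / (Real.exp 1 * β)) / γ) *
          (2 * (Real.cosh (μS * τ) - 1) / (μS * τ ^ 2 * Λ)) < 1 / NF - ε := by
        rw [div_mul_div_comm, div_lt_iff₀ (by positivity)]
        rw [show (1:ℝ) / NF - ε = (1 - ε * NF) / NF by field_simp]
        rw [div_mul_eq_mul_div, lt_div_iff₀ hNF0]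
        have hb' : (0:ℝ) < Real.exp 1 * β := by positivity
        rw [show (1 - ε) * (1 / (Real.exp 1 * β)) * (2 * (Real.cosh (μS * τ) - 1)) * NF
            = ((1 - ε) * (2 * (Real.cosh (μS * τ) - 1)) * NF) / (Real.exp 1 * β) by ring,
          div_lt_iff₀ hb']
        nlinarith [hΛcrit]
      linarith
    exact mul_neg_of_pos_of_neg hpos hinner
  refine ⟨hE, fun F hF0 hFnn hrec => ?_⟩
  set q : ℝ := Real.exp ((1 - r) * ρ * τ *
      (((1 - ε) * α / γ) * (2 * (Real.cosh (μS * τ) - 1) / (μS * τ ^ 2 * Λ))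
        - (1 / NF - ε))) with hq
  have hq0 : 0 < q := Real.exp_pos _
  have hq1 : q < 1 := Real.exp_lt_one_iff.mpr hE
  have hbound : ∀ n, F n ≤ F 0 * q ^ n := by
    intro n
    induction n with
    | zero => simp
    | succ n ih =>
      calc F (n + 1) ≤ F n * q := hrec n
        _ ≤ (F 0 * q ^ n) * q := by
            exact mul_le_mul_of_nonneg_right ih hq0.le
        _ = F 0 * q ^ (n + 1) := by ring
  refine ⟨hbound, ?_⟩
  have htend : Tendsto (fun n : ℕ => F 0 * q ^ n) atTop (nhds 0) := by
    have := tendsto_pow_atTop_nhds_zero_of_lt_one hq0.le hq1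
    simpa using this.const_mul (F 0)
  exact squeeze_zero hFnn hbound htend
end
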